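/- arXiv:1803.07303 — 3 statements merged into one kernel-verified Lean document; each statement's English description precedes it below -/
import Mathlib

section
/- The composition of simulations is a simulation: if R is a simulation of graph G in graph H and R' is a simulation of H in graph K, then the relational composition R' ∘ R is a simulation of G in K. -/
/-- A graph with predicate labels in `L` and an occurrence interval (a set of
naturals) on every edge. -/
structure LabGraph (L : Type) where
  N : Type
  E : Type
  [fintypeN : Fintype N]
  [fintypeE : Fintype E]
  [deqN : DecidableEq N]
  [deqE : DecidableEq E]
  source : E → N
  target : E → N
  lab : E → L
  occur : E → Set ℕ

attribute [instance] LabGraph.fintypeN LabGraph.fintypeE LabGraph.deqN LabGraph.deqE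

/-- Point-wise sum of a finite family of sets of naturals:
⊕_{a ∈ s} F a = { Σ_{a ∈ s} g a | g a ∈ F a }.  The empty sum is {0}. -/
def setSum {α : Type} (s : Finset α) (F : α → Set ℕ) : Set ℕ :=
  {x | ∃ g : α → ℕ, (∀ a ∈ s, g a ∈ F a) ∧ x = ∑ a ∈ s, g a}

/-- R ⊆ N_G × N_H is a simulation of G in H if every pair (n,m) ∈ R has a
witness λ from the out-edges of n to the out-edges of m preserving labels,
with related targets, and such that for every out-edge f of m the point-wise
sum of the occurrence intervals of the edges mapped to f is included in the
occurrence interval of f. -/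
def IsSimulation {L : Type} (G H : LabGraph L) (R : Set (G.N × H.N)) : Prop :=
  ∀ p ∈ R, ∃ lam : {e : G.E // G.source e = p.1} → {f : H.E // H.source f = p.2},
    (∀ e, G.lab e.1 = H.lab (lam e).1) ∧
    (∀ e, (G.target e.1, H.target (lam e).1) ∈ R) ∧
    (∀ f : {f : H.E // H.source f = p.2},
      setSum (Finset.univ.filter (fun e => lam e = f)) (fun e => G.occur e.1)
        ⊆ H.occur f.1)

/-- G ≼ H : there is a simulation of G in H whose domain is all of N_G. -/
def Embeds {L : Type} (G H : LabGraph L) : Prop :=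
  ∃ R : Set (G.N × H.N), IsSimulation G H R ∧ ∀ n : G.N, ∃ m, (n, m) ∈ R

/-- A simple graph: every occurrence interval is [1;1] and there are no two
distinct edges with the same source, target and label. -/
def IsSimple {L : Type} (G : LabGraph L) : Prop :=
  (∀ e : G.E, G.occur e = Set.Icc 1 1) ∧
  (∀ e e' : G.E, G.source e = G.source e' → G.target e = G.target e' →
    G.lab e = G.lab e' → e = e')

/-! The witness for the composite is `λ' ∘ λ`. The edges it sends to `f` split into the fibres
of `λ` over the edges `y` that `λ'` sends to `f`; by associativity of the point-wise sum their
occurrence sum lies in the sum over those `y` of subsets of `occur y`, hence in `occur f`. -/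

section SetSum

variable {α β : Type}

theorem setSum_mono {s : Finset α} {F F' : α → Set ℕ} (h : ∀ a ∈ s, F a ⊆ F' a) :
    setSum s F ⊆ setSum s F' := by
  rintro x ⟨g, hg, rfl⟩
  exact ⟨g, fun a ha => h a ha (hg a ha), rfl⟩

theorem setSum_filter_comp_subset {γ : Type} [Fintype α] [Fintype β] [DecidableEq β]
    [DecidableEq γ] (φ : α → β) (ψ : β → γ) (c : γ) (F : α → Set ℕ) :
    setSum {a | ψ (φ a) = c} F ⊆
      setSum {b | ψ b = c} (fun b => setSum {a | φ a = b} F) := by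
  rintro x ⟨g, hg, rfl⟩
  refine ⟨fun b => ∑ a with φ a = b, g a, fun b hb => ⟨g, fun a ha => hg a ?_, rfl⟩, ?_⟩
  · simp only [Finset.mem_filter, Finset.mem_univ, true_and] at ha hb ⊢
    rw [ha, hb]
  · refine (Finset.sum_fiberwise_of_maps_to (g := φ) (fun a ha => ?_) g).symm.trans
      (Finset.sum_congr rfl fun b hb => Finset.sum_congr ?_ fun _ _ => rfl)
    · simpa using ha
    · ext a
      simp only [Finset.mem_filter, Finset.mem_univ, true_and] at hb ⊢
      exact ⟨And.right, fun h => ⟨h ▸ hb, h⟩⟩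

end SetSum

/-- Composition of simulations is a simulation. -/
theorem simulation_comp {L : Type} (G H K : LabGraph L)
    (R : Set (G.N × H.N)) (R' : Set (H.N × K.N))
    (hR : IsSimulation G H R) (hR' : IsSimulation H K R') :
    IsSimulation G K {p | ∃ m : H.N, (p.1, m) ∈ R ∧ (m, p.2) ∈ R'} := by
  rintro ⟨n, k⟩ ⟨m, hnm, hmk⟩
  obtain ⟨lam, hlab, htgt, hsum⟩ := hR (n, m) hnm
  obtain ⟨lam', hlab', htgt', hsum'⟩ := hR' (m, k) hmk
  refine ⟨lam' ∘ lam, fun e => (hlab e).trans (hlab' (lam e)),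
    fun e => ⟨_, htgt e, htgt' (lam e)⟩, fun f => ?_⟩
  calc setSum {e | lam' (lam e) = f} (fun e => G.occur e.1)
      ⊆ setSum {y | lam' y = f} (fun y => setSum {e | lam e = y} (fun e => G.occur e.1)) :=
        setSum_filter_comp_subset lam lam' f _
    _ ⊆ setSum {y | lam' y = f} (fun y => H.occur y.1) := setSum_mono fun y _ => hsum y
    _ ⊆ K.occur f.1 := hsum' f
end

section
/- The Presburger formula construction ψ_E is correct for unordered concatenation: if ψ_{E1}(w1, n) holds iff w1 ∈ L(E1)^n and ψ_{E2}(w2, n) holds iff w2 ∈ L(E2)^n, then ψ_{E1‖E2}(w,n) := ∃w1,w2. w = w1 + w2 ∧ ψ_{E1}(w1,n) ∧ ψ_{E2}(w2,n) holds iff w ∈ L(E1‖E2)^n. -/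
def bagLangUnion {Δ : Type} (L1 L2 : Set (Δ → ℕ)) : Set (Δ → ℕ) :=
  {w | ∃ w1 ∈ L1, ∃ w2 ∈ L2, w = w1 + w2}

def bagLangPow {Δ : Type} (L : Set (Δ → ℕ)) : ℕ → Set (Δ → ℕ)
  | 0 => {0}
  | i + 1 => bagLangUnion L (bagLangPow L i)

lemma bagLangPow_union {Δ : Type} (L1 L2 : Set (Δ → ℕ)) :
    ∀ n (w : Δ → ℕ), w ∈ bagLangPow (bagLangUnion L1 L2) n ↔
      ∃ w1 ∈ bagLangPow L1 n, ∃ w2 ∈ bagLangPow L2 n, w = w1 + w2 := by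
  intro n
  induction n with
  | zero =>
    intro w
    constructor
    · rintro rfl
      exact ⟨0, rfl, 0, rfl, by simp⟩
    · rintro ⟨w1, rfl, w2, rfl, rfl⟩
      simp [bagLangPow]
  | succ i ih =>
    intro w
    constructor
    · rintro ⟨a, ⟨a1, ha1, a2, ha2, rfl⟩, b, hb, rfl⟩
      rcases (ih b).1 hb with ⟨b1, hb1, b2, hb2, rfl⟩
      exact ⟨a1 + b1, ⟨a1, ha1, b1, hb1, rfl⟩, a2 + b2, ⟨a2, ha2, b2, hb2, rfl⟩,
        by ext x; simp; ring⟩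
    · rintro ⟨w1, ⟨a1, ha1, b1, hb1, rfl⟩, w2, ⟨a2, ha2, b2, hb2, rfl⟩, rfl⟩
      exact ⟨a1 + a2, ⟨a1, ha1, a2, ha2, rfl⟩, b1 + b2, (ih _).2 ⟨b1, hb1, b2, hb2, rfl⟩,
        by ext x; simp; ring⟩

/-- Correctness of the Presburger encoding for unordered concatenation: if ψ_{E1}
and ψ_{E2} characterize membership in L(E1)^n and L(E2)^n, then
ψ_{E1‖E2}(w,n) := ∃w1 w2. w = w1 + w2 ∧ ψ_{E1}(w1,n) ∧ ψ_{E2}(w2,n)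
characterizes membership in L(E1‖E2)^n = (L1 ⊎ L2)^n. -/
theorem psi_conc_correct {Δ : Type} (L1 L2 : Set (Δ → ℕ))
    (P1 P2 : (Δ → ℕ) → ℕ → Prop)
    (h1 : ∀ w n, P1 w n ↔ w ∈ bagLangPow L1 n)
    (h2 : ∀ w n, P2 w n ↔ w ∈ bagLangPow L2 n) :
    ∀ w n, (∃ w1 w2, w = w1 + w2 ∧ P1 w1 n ∧ P2 w2 n) ↔
      w ∈ bagLangPow (bagLangUnion L1 L2) n := by
  intro w n
  rw [bagLangPow_union]
  constructor
  · rintro ⟨w1, w2, rfl, hp1, hp2⟩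
    exact ⟨w1, (h1 _ _).1 hp1, w2, (h2 _ _).1 hp2, rfl⟩
  · rintro ⟨w1, hw1, w2, hw2, rfl⟩
    exact ⟨w1, w2, rfl, (h1 _ _).2 hw1, (h2 _ _).2 hw2⟩
end

section
/- For the disjunction case of the Presburger encoding: for any bag languages L1, L2 and natural n, (L1 ∪ L2)^n = ⋃_{n1 + n2 = n} L1^{n1} ⊎ L2^{n2}. -/
/-!
`⊎` is pointwise addition of sets of bags, so `L^i` is the repeated sum `i • L` in the
commutative monoid of sets. Pointwise addition distributes over `∪`, so each of the `n` factors
of `(L1 ∪ L2)^n` contributes a bag of `L1` or of `L2`, and commutativity collects them into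
`L1^n1 ⊎ L2^n2` with `n1 + n2 = n`.
-/

open Pointwise

theorem Set.union_nsmul {M : Type*} [AddCommMonoid M] (s t : Set M) (n : ℕ) :
    n • (s ∪ t) = ⋃ (i) (j) (_ : i + j = n), i • s + j • t := by
  induction n with
  | zero =>
    ext w
    simp
  | succ n ih =>
    have absorb_s (i j : ℕ) : s + (i • s + j • t) = (i + 1) • s + j • t := by
      rw [succ_nsmul', add_assoc]
    have absorb_t (i j : ℕ) : t + (i • s + j • t) = i • s + (j + 1) • t := by
      rw [succ_nsmul' t, add_left_comm]
    calc (n + 1) • (s ∪ t) = (s + n • (s ∪ t)) ∪ (t + n • (s ∪ t)) := by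
          rw [succ_nsmul', Set.union_add]
      _ = (⋃ (i) (j) (_ : i + j = n), (i + 1) • s + j • t) ∪
            ⋃ (i) (j) (_ : i + j = n), i • s + (j + 1) • t := by
          simp only [ih, Set.add_iUnion, absorb_s, absorb_t]
      _ = ⋃ (i) (j) (_ : i + j = n + 1), i • s + j • t := by
          ext w
          simp only [Set.mem_union, Set.mem_iUnion, exists_prop]
          constructor
          · rintro (⟨i, j, hij, hw⟩ | ⟨i, j, hij, hw⟩)
            exacts [⟨i + 1, j, by omega, hw⟩, ⟨i, j + 1, by omega, hw⟩]
          · rintro ⟨_ | i, j, hij, hw⟩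
            · exact Or.inr ⟨0, n, by omega, by rwa [show j = n + 1 by omega] at hw⟩
            · exact Or.inl ⟨i, j, by omega, hw⟩

theorem bagLangUnion_eq_add {Δ : Type} (L1 L2 : Set (Δ → ℕ)) : bagLangUnion L1 L2 = L1 + L2 := by
  ext w
  simp [bagLangUnion, Set.mem_add, eq_comm]

theorem bagLangPow_eq_nsmul {Δ : Type} (L : Set (Δ → ℕ)) (n : ℕ) : bagLangPow L n = n • L := by
  induction n with
  | zero => rfl
  | succ n ih => rw [bagLangPow, bagLangUnion_eq_add, ih, succ_nsmul']

/-- (L1 ∪ L2)^n = ⋃_{n1+n2=n} L1^{n1} ⊎ L2^{n2}. -/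
theorem bagLangPow_set_union {Δ : Type} (L1 L2 : Set (Δ → ℕ)) (n : ℕ) :
    bagLangPow (L1 ∪ L2) n =
      {w | ∃ n1 n2, n1 + n2 = n ∧ w ∈ bagLangUnion (bagLangPow L1 n1) (bagLangPow L2 n2)} := by
  ext w
  simp only [bagLangPow_eq_nsmul, bagLangUnion_eq_add, Set.union_nsmul, Set.mem_iUnion,
    Set.mem_ofPred_eq, exists_prop]
end
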